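/- Assume #V ≥ 2 and let a ∈ ℝ. If κ̲(x,y) ≥ a for every pair x ≠ y with x ∼ y, then κ̲(x,y) ≥ a for every pair x ≠ y in V. -/

import Mathlib

open scoped BigOperators

noncomputable section

namespace HypRicci

variable {V : Type*} [Fintype V] [DecidableEq V]

/-- A finite weighted hypergraph on vertex set `V`: a finite set of nonempty
hyperedges together with positive weights. -/
structure Hypergraph (V : Type*) [Fintype V] [DecidableEq V] : Type _ where
  E : Finset (Finset V)
  w : Finset V → ℝ
  w_pos : ∀ e ∈ E, 0 < w e
  e_nonempty : ∀ e ∈ E, e.Nonempty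

/-- Degree `d_x = ∑_{e ∋ x} w(e)`. -/
def deg (H : Hypergraph V) (x : V) : ℝ := ∑ e ∈ H.E, if x ∈ e then H.w e else 0

/-- Volume `vol(V) = ∑_x d_x`. -/
def vol (H : Hypergraph V) : ℝ := ∑ x, deg H x

/-- Weighted inner product `⟨f,g⟩ = ∑_x f(x) g(x) / d_x`. -/
def inn (H : Hypergraph V) (f g : V → ℝ) : ℝ := ∑ x, f x * g x / deg H x

/-- Norm associated to `inn`. -/
def nrm (H : Hypergraph V) (f : V → ℝ) : ℝ := Real.sqrt (inn H f f)

/-- Indicator function `δ_x`. -/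
def delta (x : V) : V → ℝ := fun z => if z = x then 1 else 0

/-- Standard (unweighted) dot product `u^⊤ v`. -/
def dot (u v : V → ℝ) : ℝ := ∑ x, u x * v x

/-- Base polytope `B_e = conv{δ_x − δ_y : x,y ∈ e}`. -/
def Bp (e : Finset V) : Set (V → ℝ) :=
  convexHull ℝ {b : V → ℝ | ∃ x ∈ e, ∃ y ∈ e, b = delta x - delta y}

/-- The multivalued hypergraph Laplacian
`L(f) = {∑_e w(e) (b_e^⊤ f) b_e : b_e ∈ argmax_{b ∈ B_e} b^⊤ f}`. -/
def Lap (H : Hypergraph V) (f : V → ℝ) : Set (V → ℝ) :=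
  { g | ∃ b : Finset V → (V → ℝ),
      (∀ e ∈ H.E, b e ∈ Bp e ∧ ∀ b' ∈ Bp e, dot b' f ≤ dot (b e) f) ∧
      g = ∑ e ∈ H.E, (H.w e * dot (b e) f) • b e }

/-- `D⁻¹ f`. -/
def Dinv (H : Hypergraph V) (f : V → ℝ) : V → ℝ := fun x => f x / deg H x

/-- Normalized Laplacian `𝓛(f) = L(D⁻¹ f)`. -/
def NL (H : Hypergraph V) (f : V → ℝ) : Set (V → ℝ) := Lap H (Dinv H f)

/-- The resolvent `J_λ = (I + λ𝓛)⁻¹`: it sends `f` to the (unique) `g` with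
`f ∈ g + λ 𝓛(g)`. -/
def Resolvent (H : Hypergraph V) (l : ℝ) (f : V → ℝ) : V → ℝ :=
  Classical.epsilon fun g => ∃ h ∈ NL H g, f = g + l • h

/-- Adjacency: `x ∼ y` iff some hyperedge contains both. -/
def Adj (H : Hypergraph V) (x y : V) : Prop := ∃ e ∈ H.E, x ∈ e ∧ y ∈ e

/-- There is a chain of length `n` of successively adjacent vertices from `x` to `y`. -/
def chainProp (H : Hypergraph V) (x y : V) (n : ℕ) : Prop :=
  ∃ z : ℕ → V, z 0 = x ∧ z n = y ∧ ∀ i < n, Adj H (z i) (z (i + 1))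

/-- Connectedness of the hypergraph. -/
def Connected (H : Hypergraph V) : Prop := ∀ x y : V, ∃ n, chainProp H x y n

/-- Graph distance (as a natural number). -/
def hdistN (H : Hypergraph V) (x y : V) : ℕ := sInf {n | chainProp H x y n}

/-- Graph distance `d(x,y)` as a real number. -/
def gdist (H : Hypergraph V) (x y : V) : ℝ := (hdistN H x y : ℝ)

/-- Diameter `diam(H) = max_{x,y} d(x,y)`. -/
def hdiam (H : Hypergraph V) : ℝ :=
  (((Finset.univ : Finset (V × V)).sup fun p => hdistN H p.1 p.2 : ℕ) : ℝ)

/-- Weighted `1`-Lipschitz functions: `⟨f, δ_x − δ_y⟩ ≤ d(x,y)` for all `x, y`. -/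
def Lip1 (H : Hypergraph V) : Set (V → ℝ) :=
  { f | ∀ x y : V, inn H f (delta x - delta y) ≤ gdist H x y }

/-- The `λ`-nonlinear Kantorovich difference. -/
def KD (H : Hypergraph V) (l : ℝ) (x y : V) : ℝ :=
  sSup { r | ∃ f ∈ Lip1 H, r = inn H (Resolvent H l f) (delta x - delta y) }

/-- `κ_λ(x,y) = 1 − KD_λ(x,y)/d(x,y)`. -/
def kappa (H : Hypergraph V) (l : ℝ) (x y : V) : ℝ := 1 - KD H l x y / gdist H x y

/-- Lower coarse Ricci curvature `κ̲(x,y) = liminf_{λ↓0} κ_λ(x,y)/λ`. -/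
def kappaLower (H : Hypergraph V) (x y : V) : EReal :=
  Filter.liminf (fun l : ℝ => ((kappa H l x y / l : ℝ) : EReal)) (nhdsWithin 0 (Set.Ioi 0))

/-- Upper coarse Ricci curvature `κ̄(x,y) = limsup_{λ↓0} κ_λ(x,y)/λ`. -/
def kappaUpper (H : Hypergraph V) (x y : V) : EReal :=
  Filter.limsup (fun l : ℝ => ((kappa H l x y / l : ℝ) : EReal)) (nhdsWithin 0 (Set.Ioi 0))

/-- Canonical restriction `𝓛⁰ f`: the unique element of minimal norm of `𝓛(f)`. -/
def L0 (H : Hypergraph V) (f : V → ℝ) : V → ℝ :=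
  Classical.epsilon fun g => g ∈ NL H f ∧ ∀ h ∈ NL H f, nrm H g ≤ nrm H h

/-- The stationary distribution `π(x) = d_x / vol(V)`. -/
def piH (H : Hypergraph V) : V → ℝ := fun x => deg H x / vol H

/-- The energy `Q(h) = (1/2) ∑_e w(e) max_{x,y ∈ e} (h(x) − h(y))²`. -/
def Qform (H : Hypergraph V) (h : V → ℝ) : ℝ :=
  (1 / 2) * ∑ e ∈ H.E, H.w e * sSup { r | ∃ x ∈ e, ∃ y ∈ e, r = (h x - h y) ^ 2 }

end HypRicci

/-!
Along a geodesic `x = z₀ ∼ z₁ ∼ ⋯ ∼ zₙ = y`, `n = d(x,y)`, the Kantorovich difference is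
subadditive, `KD_λ(x,y) ≤ ∑ KD_λ(zᵢ,zᵢ₊₁)`, so `κ_λ(x,y)` is at least the average of the
`κ_λ(zᵢ,zᵢ₊₁)`; dividing by `λ` and passing to the `liminf` gives the bound `a`.

Subadditivity needs the suprema defining `KD_λ` to be finite, hence needs the resolvent to exist.
`𝓛` is the subdifferential of `g ↦ ½ ∑ₑ w(e) (maxₓ,ᵧ∈ₑ (D⁻¹g)(x) - (D⁻¹g)(y))²`, so `J_λ f` is the
minimiser of a coercive functional; its first-order condition, turned into a membership in
`𝓛(g)` by Hahn–Banach, is exactly `f ∈ g + λ𝓛(g)`.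
-/

open Filter Topology

namespace HypRicci

section Limits

lemma tendsto_add_mul_nhdsGT_zero (a b : ℝ) :
    Tendsto (fun t : ℝ => a + t * b) (𝓝[>] 0) (𝓝 a) := by
  simpa using (tendsto_const_nhds.add (tendsto_id.mul tendsto_const_nhds)).mono_left
    (nhdsWithin_le_nhds (a := (0 : ℝ)) (s := Set.Ioi 0))

lemma nonneg_of_eventually_nonneg_mul_add_sq {A B : ℝ}
    (h : ∀ᶠ t in 𝓝[>] (0 : ℝ), 0 ≤ t * A + t ^ 2 * B) : 0 ≤ A := by
  refine ge_of_tendsto (tendsto_add_mul_nhdsGT_zero A B) ?_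
  filter_upwards [h, self_mem_nhdsWithin] with t ht (htpos : 0 < t)
  exact (mul_nonneg_iff_of_pos_left htpos).1 (by linarith)

lemma le_liminf_sum_div_card {α ι : Type*} {l : Filter α} {s : Finset ι} (hs : s.Nonempty)
    {f : ι → α → ℝ} {a : ℝ} (h : ∀ i ∈ s, (a : EReal) ≤ liminf (fun t => (f i t : EReal)) l) :
    (a : EReal) ≤ liminf (fun t => (((∑ i ∈ s, f i t) / s.card : ℝ) : EReal)) l := by
  rw [le_liminf_iff]
  intro c hc
  obtain ⟨b, hcb, hba⟩ := EReal.exists_between_coe_real hc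
  have hev : ∀ᶠ t in l, ∀ i ∈ s, b < f i t := (eventually_all_finset s).2 fun i hi =>
    (eventually_lt_of_lt_liminf (hba.trans_le (h i hi))).mono fun t ht => by exact_mod_cast ht
  filter_upwards [hev] with t ht
  refine hcb.trans (EReal.coe_lt_coe_iff.2 ?_)
  rw [lt_div_iff₀ (Nat.cast_pos.2 hs.card_pos)]
  calc b * s.card = ∑ i ∈ s, b := by simp [mul_comm]
    _ < ∑ i ∈ s, f i t := Finset.sum_lt_sum_of_nonempty hs ht

end Limits

section PairMax

variable {V : Type*}

def pairMax (Q : Finset (V × V)) (u : V → ℝ) : ℝ :=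
  if hQ : Q.Nonempty then Q.sup' hQ fun pq => u pq.1 - u pq.2 else 0

def argmaxPairs (Q : Finset (V × V)) (u : V → ℝ) : Finset (V × V) :=
  Q.filter fun pq => u pq.1 - u pq.2 = pairMax Q u

variable {Q : Finset (V × V)}

lemma sub_le_pairMax {pq : V × V} (hpq : pq ∈ Q) (u : V → ℝ) :
    u pq.1 - u pq.2 ≤ pairMax Q u := by
  rw [pairMax, dif_pos ⟨pq, hpq⟩]
  exact Finset.le_sup' (fun pq : V × V => u pq.1 - u pq.2) hpq

lemma pairMax_le (hQ : Q.Nonempty) {u : V → ℝ} {r : ℝ}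
    (h : ∀ pq ∈ Q, u pq.1 - u pq.2 ≤ r) : pairMax Q u ≤ r := by
  rw [pairMax, dif_pos hQ]
  exact Finset.sup'_le hQ _ h

lemma exists_pairMax_eq (hQ : Q.Nonempty) (u : V → ℝ) :
    ∃ pq ∈ Q, pairMax Q u = u pq.1 - u pq.2 := by
  rw [pairMax, dif_pos hQ]
  exact Finset.exists_mem_eq_sup' hQ _

lemma continuous_pairMax (Q : Finset (V × V)) : Continuous (pairMax Q) := by
  by_cases hQ : Q.Nonempty
  · show Continuous fun u => pairMax Q u
    simp only [pairMax, dif_pos hQ]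
    exact Continuous.finset_sup'_apply hQ fun pq _ =>
      (continuous_apply pq.1).sub (continuous_apply pq.2)
  · show Continuous fun u => pairMax Q u
    simp only [pairMax, dif_neg hQ]
    exact continuous_const

lemma argmaxPairs_nonempty (hQ : Q.Nonempty) (u : V → ℝ) : (argmaxPairs Q u).Nonempty := by
  obtain ⟨pq, hpq, heq⟩ := exists_pairMax_eq hQ u
  exact ⟨pq, Finset.mem_filter.2 ⟨hpq, heq.symm⟩⟩

lemma eventually_pairMax_add_smul (hQ : Q.Nonempty) (u U : V → ℝ) :
    ∀ᶠ t in 𝓝[>] (0 : ℝ),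
      pairMax Q (u + t • U) = pairMax Q u + t * pairMax (argmaxPairs Q u) U := by
  have hray : ∀ (t : ℝ) (pq : V × V), (u + t • U) pq.1 - (u + t • U) pq.2
      = (u pq.1 - u pq.2) + t * (U pq.1 - U pq.2) := fun t pq => by
    simp only [Pi.add_apply, Pi.smul_apply, smul_eq_mul]; ring
  have hupper : ∀ pq ∈ Q, ∀ᶠ t in 𝓝[>] (0 : ℝ),
      (u + t • U) pq.1 - (u + t • U) pq.2 ≤ pairMax Q u + t * pairMax (argmaxPairs Q u) U := by
    intro pq hpq
    simp only [hray]
    by_cases hact : pq ∈ argmaxPairs Q u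
    · filter_upwards [self_mem_nhdsWithin] with t (ht : 0 < t)
      rw [(Finset.mem_filter.1 hact).2]
      gcongr
      exact sub_le_pairMax hact U
    · -- an inactive pair stays strictly below the maximum for small `t`
      have hlt : u pq.1 - u pq.2 < pairMax Q u :=
        (sub_le_pairMax hpq u).lt_of_ne fun h => hact (Finset.mem_filter.2 ⟨hpq, h⟩)
      exact ((tendsto_add_mul_nhdsGT_zero _ _).eventually_lt
        (tendsto_add_mul_nhdsGT_zero _ _) hlt).mono fun t ht => ht.le
  obtain ⟨pq, hpq, hpqU⟩ := exists_pairMax_eq (argmaxPairs_nonempty hQ u) U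
  have hpqQ := (Finset.mem_filter.1 hpq).1
  filter_upwards [(Filter.eventually_all_finset Q).2 hupper] with t ht
  refine le_antisymm (pairMax_le hQ ht) ?_
  calc pairMax Q u + t * pairMax (argmaxPairs Q u) U = (u + t • U) pq.1 - (u + t • U) pq.2 := by
        rw [hray, hpqU, (Finset.mem_filter.1 hpq).2]
    _ ≤ pairMax Q (u + t • U) := sub_le_pairMax hpqQ _

end PairMax

section Dot

variable {V : Type*} [Fintype V]

lemma dot_eq_dotProduct (u v : V → ℝ) : dot u v = u ⬝ᵥ v := rfl

lemma isLinearMap_dot_left (u : V → ℝ) : IsLinearMap ℝ fun b : V → ℝ => dot b u :=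
  ⟨fun b b' => add_dotProduct b b' u, fun c b => smul_dotProduct c b u⟩

lemma mem_of_forall_exists_dot_le {K : Set (V → ℝ)} (hK : Convex ℝ K) (hKc : IsClosed K)
    {h : V → ℝ} (hh : ∀ U : V → ℝ, ∃ k ∈ K, dot h U ≤ dot k U) : h ∈ K := by
  classical
  by_contra hhK
  obtain ⟨ψ, r, hψK, hψh⟩ := geometric_hahn_banach_closed_point hK hKc hhK
  set U : V → ℝ := fun x => ψ fun y => if x = y then 1 else 0
  have hψ : ∀ z, ψ z = dot z U := fun z => by
    simpa [dot] using (ψ : (V → ℝ) →ₗ[ℝ] ℝ).pi_apply_eq_sum_univ z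
  obtain ⟨k, hk, hle⟩ := hh U
  have := hψK k hk
  rw [hψ] at this hψh
  linarith

end Dot

section Polytope

open scoped Pointwise

variable {V : Type*} [DecidableEq V]

def pairHull (Q : Finset (V × V)) : Set (V → ℝ) :=
  convexHull ℝ ((fun pq : V × V => delta pq.1 - delta pq.2) '' Q)

variable {Q : Finset (V × V)}

lemma sub_mem_pairHull {pq : V × V} (hpq : pq ∈ Q) : delta pq.1 - delta pq.2 ∈ pairHull Q :=
  subset_convexHull ℝ _ ⟨pq, hpq, rfl⟩

lemma isCompact_pairHull (Q : Finset (V × V)) : IsCompact (pairHull Q) :=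
  (Q.finite_toSet.image _).isCompact_convexHull (𝕜 := ℝ)

lemma pairHull_subset_Bp {e : Finset V} (hQ : Q ⊆ e ×ˢ e) : pairHull Q ⊆ Bp e := by
  refine convexHull_mono ?_
  rintro _ ⟨pq, hpq, rfl⟩
  obtain ⟨hp, hq⟩ := Finset.mem_product.1 (hQ hpq)
  exact ⟨pq.1, hp, pq.2, hq, rfl⟩

variable [Fintype V]

lemma dot_delta_sub (x y : V) (u : V → ℝ) : dot (delta x - delta y) u = u x - u y := by
  simp [dot, delta, sub_mul, Finset.sum_sub_distrib]

lemma dot_const_eq_zero_of_mem_Bp {e : Finset V} {b : V → ℝ} (hb : b ∈ Bp e) (c : ℝ) :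
    dot b (fun _ => c) = 0 := by
  refine convexHull_min ?_ (convex_hyperplane (isLinearMap_dot_left _) 0) hb
  rintro _ ⟨x, -, y, -, rfl⟩
  simp [dot_delta_sub]

lemma dot_le_pairMax_of_mem_Bp {e : Finset V} {b : V → ℝ} (hb : b ∈ Bp e) (u : V → ℝ) :
    dot b u ≤ pairMax (e ×ˢ e) u := by
  refine convexHull_min ?_ (convex_halfSpace_le (isLinearMap_dot_left u) _) hb
  rintro _ ⟨x, hx, y, hy, rfl⟩
  show dot _ u ≤ _
  rw [dot_delta_sub]
  exact sub_le_pairMax (Q := e ×ˢ e) (pq := (x, y)) (Finset.mem_product.2 ⟨hx, hy⟩) u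

lemma dot_eq_pairMax_of_mem_pairHull_argmaxPairs {b u : V → ℝ}
    (hb : b ∈ pairHull (argmaxPairs Q u)) : dot b u = pairMax Q u := by
  refine convexHull_min ?_ (convex_hyperplane (isLinearMap_dot_left u) _) hb
  rintro _ ⟨pq, hpq, rfl⟩
  show dot _ u = _
  rw [dot_delta_sub]
  exact (Finset.mem_filter.1 hpq).2

lemma exists_eq_sum_smul_of_dot_le {ι : Type*} (s : Finset ι) (c : ι → ℝ)
    (Q : ι → Finset (V × V)) (hQ : ∀ i ∈ s, (Q i).Nonempty) {h : V → ℝ}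
    (hh : ∀ U : V → ℝ, dot h U ≤ ∑ i ∈ s, c i * pairMax (Q i) U) :
    ∃ b : ι → V → ℝ, (∀ i ∈ s, b i ∈ pairHull (Q i)) ∧ h = ∑ i ∈ s, c i • b i := by
  classical
  have hK : Convex ℝ (∑ i ∈ s, c i • pairHull (Q i)) :=
    convex_sum _ fun i _ => (convex_convexHull ℝ _).smul (c i)
  have hKc : IsCompact (∑ i ∈ s, c i • pairHull (Q i)) :=
    Finset.sum_induction _ IsCompact (fun _ _ => IsCompact.add) isCompact_singleton
      fun i _ => (isCompact_pairHull (Q i)).smul (c i)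
  have hmem : h ∈ ∑ i ∈ s, c i • pairHull (Q i) := by
    refine mem_of_forall_exists_dot_le hK hKc.isClosed fun U => ?_
    have hvert : ∀ i, ∃ k, i ∈ s → k ∈ pairHull (Q i) ∧ dot k U = pairMax (Q i) U := by
      intro i
      by_cases hi : i ∈ s
      · obtain ⟨pq, hpq, heq⟩ := exists_pairMax_eq (hQ i hi) U
        exact ⟨_, fun _ => ⟨sub_mem_pairHull hpq, by rw [dot_delta_sub, heq]⟩⟩
      · exact ⟨0, fun h => absurd h hi⟩
    choose k hk using hvert
    refine ⟨∑ i ∈ s, c i • k i, Set.finsetSum_mem_finsetSum _ _ _ fun i hi =>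
      Set.smul_mem_smul_set (hk i hi).1, (hh U).trans_eq ?_⟩
    simp only [dot_eq_dotProduct, sum_dotProduct, smul_dotProduct, smul_eq_mul]
    exact Finset.sum_congr rfl fun i hi => by rw [← dot_eq_dotProduct, (hk i hi).2]
  obtain ⟨g, hg, hgh⟩ := (Set.mem_finsetSum _ _ _).1 hmem
  have hdecomp : ∀ i, ∃ b, i ∈ s → b ∈ pairHull (Q i) ∧ c i • b = g i := by
    intro i
    by_cases hi : i ∈ s
    · obtain ⟨b, hb, hbg⟩ := Set.mem_smul_set.1 (hg hi)
      exact ⟨b, fun _ => ⟨hb, hbg⟩⟩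
    · exact ⟨0, fun h => absurd h hi⟩
  choose b hb using hdecomp
  exact ⟨b, fun i hi => (hb i hi).1,
    hgh.symm.trans (Finset.sum_congr rfl fun i hi => (hb i hi).2.symm)⟩

end Polytope

variable {V : Type*} [Fintype V] [DecidableEq V]

section Laplacian

variable (H : Hypergraph V)

lemma inn_eq_dot (f g : V → ℝ) : inn H f g = dot f (Dinv H g) := by
  simp only [inn, dot, Dinv, mul_div_assoc]

lemma inn_delta_sub (f : V → ℝ) (x y : V) :
    inn H f (delta x - delta y) = f x / deg H x - f y / deg H y := by
  simp [inn, delta, mul_sub, sub_div, Finset.sum_sub_distrib, ite_div]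

lemma inn_sub_smul_deg_delta_sub (hdeg : ∀ x : V, 0 < deg H x) (f : V → ℝ) (c : ℝ)
    (x y : V) : inn H (f - c • deg H) (delta x - delta y) = inn H f (delta x - delta y) := by
  simp only [inn_delta_sub, Pi.sub_apply, Pi.smul_apply, smul_eq_mul, sub_div,
    mul_div_cancel_right₀ _ (hdeg x).ne', mul_div_cancel_right₀ _ (hdeg y).ne']
  ring

lemma two_mul_inn_le (hdeg : ∀ x : V, 0 < deg H x) (f g : V → ℝ) :
    2 * inn H f g ≤ inn H f f + inn H g g := by
  simp only [inn, Finset.mul_sum, ← Finset.sum_add_distrib]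
  gcongr with x
  rw [← mul_div_assoc, ← add_div, div_le_div_iff_of_pos_right (hdeg x)]
  nlinarith [sq_nonneg (f x - g x)]

lemma mem_NL_sub_smul_deg (hdeg : ∀ x : V, 0 < deg H x) {g h : V → ℝ} (hh : h ∈ NL H g)
    (c : ℝ) : h ∈ NL H (g - c • deg H) := by
  have hshift : ∀ e ∈ H.E, ∀ b ∈ Bp e, dot b (Dinv H (g - c • deg H)) = dot b (Dinv H g) := by
    intro e _ b hb
    have hD : Dinv H (g - c • deg H) = Dinv H g - fun _ => c := by
      funext x
      simp [Dinv, sub_div, mul_div_cancel_right₀ _ (hdeg x).ne']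
    rw [hD, dot_eq_dotProduct, dotProduct_sub, ← dot_eq_dotProduct, ← dot_eq_dotProduct,
      dot_const_eq_zero_of_mem_Bp hb, sub_zero]
  obtain ⟨b, hb, rfl⟩ := hh
  refine ⟨b, fun e he => ⟨(hb e he).1, fun b' hb' => ?_⟩, Finset.sum_congr rfl fun e he => ?_⟩
  · rw [hshift e he b' hb', hshift e he _ (hb e he).1]
    exact (hb e he).2 b' hb'
  · rw [hshift e he _ (hb e he).1]

lemma inn_nonneg_of_mem_NL {g h : V → ℝ} (hh : h ∈ NL H g) : 0 ≤ inn H h g := by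
  obtain ⟨b, -, rfl⟩ := hh
  rw [inn_eq_dot, dot_eq_dotProduct, sum_dotProduct]
  refine Finset.sum_nonneg fun e he => ?_
  rw [smul_dotProduct, smul_eq_mul, mul_assoc]
  exact mul_nonneg (H.w_pos e he).le (mul_self_nonneg _)

lemma inn_self_le_of_eq_add_smul (hdeg : ∀ x : V, 0 < deg H x) {l : ℝ} (hl : 0 ≤ l)
    {f g h : V → ℝ} (hh : h ∈ NL H g) (hf : f = g + l • h) : inn H g g ≤ inn H f f := by
  have hfg : inn H f g = inn H g g + l * inn H h g := by
    simp only [hf, inn, Pi.add_apply, Pi.smul_apply, smul_eq_mul, Finset.mul_sum,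
      ← Finset.sum_add_distrib]
    exact Finset.sum_congr rfl fun x _ => by ring
  nlinarith [two_mul_inn_le H hdeg f g, mul_nonneg hl (inn_nonneg_of_mem_NL H hh)]

end Laplacian

section Resolvent

variable (H : Hypergraph V)

/-- Twice the Moreau–Yosida functional whose minimiser is the resolvent `J_λ f`. -/
def resolventEnergy (l : ℝ) (f g : V → ℝ) : ℝ :=
  inn H (g - f) (g - f) + l * ∑ e ∈ H.E, H.w e * pairMax (e ×ˢ e) (Dinv H g) ^ 2

lemma continuous_resolventEnergy (l : ℝ) (f : V → ℝ) : Continuous (resolventEnergy H l f) := by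
  have hDinv : Continuous (Dinv H) := continuous_pi fun x => (continuous_apply x).div_const _
  have hpair := fun e : Finset V => (continuous_pairMax (e ×ˢ e)).comp hDinv
  unfold resolventEnergy inn
  fun_prop

lemma inn_sub_self_le_resolventEnergy {l : ℝ} (hl : 0 ≤ l) (f g : V → ℝ) :
    inn H (g - f) (g - f) ≤ resolventEnergy H l f g :=
  le_add_of_nonneg_right <| mul_nonneg hl <|
    Finset.sum_nonneg fun e he => mul_nonneg (H.w_pos e he).le (sq_nonneg _)

lemma exists_forall_resolventEnergy_le (hdeg : ∀ x : V, 0 < deg H x) {l : ℝ} (hl : 0 ≤ l)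
    (f : V → ℝ) : ∃ g₀, ∀ g, resolventEnergy H l f g₀ ≤ resolventEnergy H l f g := by
  set R : V → ℝ := fun x => √(deg H x * resolventEnergy H l f f)
  have hK : IsCompact (Set.univ.pi fun x => Set.Icc (f x - R x) (f x + R x)) :=
    isCompact_univ_pi fun x => isCompact_Icc
  refine (continuous_resolventEnergy H l f).exists_forall_le' f ?_
  filter_upwards [hK.compl_mem_cocompact] with g hg
  by_contra! hlt
  refine hg fun x _ => ?_
  have hterm : (g x - f x) * (g x - f x) / deg H x ≤ inn H (g - f) (g - f) :=
    Finset.single_le_sum (f := fun t => (g - f) t * (g - f) t / deg H t)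
      (fun t _ => div_nonneg (mul_self_nonneg _) (hdeg t).le) (Finset.mem_univ x)
  have hsq : (g x - f x) ^ 2 ≤ deg H x * resolventEnergy H l f f := by
    rw [div_le_iff₀' (hdeg x)] at hterm
    calc (g x - f x) ^ 2 ≤ deg H x * inn H (g - f) (g - f) := by rw [sq]; exact hterm
      _ ≤ deg H x * resolventEnergy H l f f := by
        gcongr
        · exact (hdeg x).le
        · exact (inn_sub_self_le_resolventEnergy H hl f g).trans hlt.le
  have habs := abs_le.1 (Real.abs_le_sqrt hsq)
  exact ⟨by linarith, by linarith⟩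

lemma inn_add_smul_deg_mul (hdeg : ∀ x : V, 0 < deg H x) (w U : V → ℝ) (t : ℝ) :
    inn H (w + t • (deg H * U)) (w + t • (deg H * U))
      = inn H w w + 2 * t * dot w U + t ^ 2 * ∑ x, deg H x * U x ^ 2 := by
  simp only [inn, dot, Pi.add_apply, Pi.smul_apply, Pi.mul_apply, smul_eq_mul, Finset.mul_sum,
    ← Finset.sum_add_distrib]
  refine Finset.sum_congr rfl fun x _ => ?_
  field_simp [(hdeg x).ne']
  ring

lemma Dinv_add_smul_deg_mul (hdeg : ∀ x : V, 0 < deg H x) (g U : V → ℝ) (t : ℝ) :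
    Dinv H (g + t • (deg H * U)) = Dinv H g + t • U := by
  funext x
  simp only [Dinv, Pi.add_apply, Pi.smul_apply, Pi.mul_apply, smul_eq_mul]
  field_simp [(hdeg x).ne']

lemma dot_sub_le_of_forall_resolventEnergy_le (hdeg : ∀ x : V, 0 < deg H x) {l : ℝ}
    {f g₀ : V → ℝ}
    (hmin : ∀ g, resolventEnergy H l f g₀ ≤ resolventEnergy H l f g) (U : V → ℝ) :
    dot (f - g₀) U ≤ l * ∑ e ∈ H.E, H.w e * pairMax (e ×ˢ e) (Dinv H g₀)
      * pairMax (argmaxPairs (e ×ˢ e) (Dinv H g₀)) U := by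
  set F := Dinv H g₀
  set M : Finset V → ℝ := fun e => pairMax (e ×ˢ e) F
  set m : Finset V → ℝ := fun e => pairMax (argmaxPairs (e ×ˢ e) F) U
  have hexp : ∀ᶠ t in 𝓝[>] (0 : ℝ), ∀ e ∈ H.E, pairMax (e ×ˢ e) (F + t • U) = M e + t * m e :=
    (eventually_all_finset _).2 fun e he =>
      eventually_pairMax_add_smul ((H.e_nonempty e he).product (H.e_nonempty e he)) F U
  have hdot : dot (f - g₀) U = -dot (g₀ - f) U := by
    simp only [dot_eq_dotProduct, ← neg_sub g₀ f, neg_dotProduct]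
  suffices h : 0 ≤ 2 * (dot (g₀ - f) U + l * ∑ e ∈ H.E, H.w e * M e * m e) by linarith
  refine nonneg_of_eventually_nonneg_mul_add_sq
    (B := ∑ x, deg H x * U x ^ 2 + l * ∑ e ∈ H.E, H.w e * m e ^ 2) ?_
  filter_upwards [hexp] with t ht
  have hsq : ∑ e ∈ H.E, H.w e * pairMax (e ×ˢ e) (F + t • U) ^ 2
      = ∑ e ∈ H.E, H.w e * M e ^ 2 + 2 * t * ∑ e ∈ H.E, H.w e * M e * m e
        + t ^ 2 * ∑ e ∈ H.E, H.w e * m e ^ 2 := by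
    simp only [Finset.mul_sum, ← Finset.sum_add_distrib]
    exact Finset.sum_congr rfl fun e he => by rw [ht e he]; ring
  have hle := hmin (g₀ + t • (deg H * U))
  rw [resolventEnergy, resolventEnergy, add_sub_right_comm, inn_add_smul_deg_mul H hdeg,
    Dinv_add_smul_deg_mul H hdeg, hsq] at hle
  linear_combination hle

lemma mem_NL_of_dot_le {g h : V → ℝ}
    (hh : ∀ U : V → ℝ, dot h U ≤ ∑ e ∈ H.E, H.w e * pairMax (e ×ˢ e) (Dinv H g)
      * pairMax (argmaxPairs (e ×ˢ e) (Dinv H g)) U) : h ∈ NL H g := by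
  set F := Dinv H g
  obtain ⟨b, hb, rfl⟩ := exists_eq_sum_smul_of_dot_le H.E (fun e => H.w e * pairMax (e ×ˢ e) F)
    (fun e => argmaxPairs (e ×ˢ e) F)
    (fun e he => argmaxPairs_nonempty ((H.e_nonempty e he).product (H.e_nonempty e he)) F) hh
  have hval : ∀ e ∈ H.E, dot (b e) F = pairMax (e ×ˢ e) F := fun e he =>
    dot_eq_pairMax_of_mem_pairHull_argmaxPairs (hb e he)
  refine ⟨b, fun e he => ⟨pairHull_subset_Bp (Finset.filter_subset _ _) (hb e he),
    fun b' hb' => (hval e he).symm ▸ dot_le_pairMax_of_mem_Bp hb' F⟩,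
    Finset.sum_congr rfl fun e he => by rw [hval e he]⟩

lemma exists_eq_add_smul_mem_NL (hdeg : ∀ x : V, 0 < deg H x) {l : ℝ} (hl : 0 < l)
    (f : V → ℝ) : ∃ g, ∃ h ∈ NL H g, f = g + l • h := by
  obtain ⟨g₀, hmin⟩ := exists_forall_resolventEnergy_le H hdeg hl.le f
  refine ⟨g₀, l⁻¹ • (f - g₀), mem_NL_of_dot_le H fun U => ?_, ?_⟩
  · rw [dot_eq_dotProduct, smul_dotProduct, ← dot_eq_dotProduct, smul_eq_mul,
      inv_mul_le_iff₀ hl]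
    exact dot_sub_le_of_forall_resolventEnergy_le H hdeg hmin U
  · rw [smul_smul, mul_inv_cancel₀ hl.ne', one_smul, add_sub_cancel]

lemma resolvent_spec (hdeg : ∀ x : V, 0 < deg H x) {l : ℝ} (hl : 0 < l) (f : V → ℝ) :
    ∃ h ∈ NL H (Resolvent H l f), f = Resolvent H l f + l • h :=
  Classical.epsilon_spec (exists_eq_add_smul_mem_NL H hdeg hl f)

end Resolvent

section Distance

variable (H : Hypergraph V)

lemma chainProp_hdistN (hconn : Connected H) (x y : V) : chainProp H x y (hdistN H x y) :=
  Nat.sInf_mem (hconn x y)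

lemma eq_of_chainProp_zero {x y : V} (h : chainProp H x y 0) : x = y := by
  obtain ⟨z, rfl, rfl, -⟩ := h
  rfl

lemma gdist_self (x : V) : gdist H x x = 0 := by
  have h : chainProp H x x 0 := ⟨fun _ => x, rfl, rfl, fun _ h => absurd h (Nat.not_lt_zero _)⟩
  simp [gdist, hdistN, Nat.eq_zero_of_le_zero (Nat.sInf_le (s := {n | chainProp H x x n}) h)]

lemma gdist_nonneg (x y : V) : 0 ≤ gdist H x y := Nat.cast_nonneg _

lemma gdist_eq_one_of_adj {x y : V} (hxy : x ≠ y) (h : Adj H x y) : gdist H x y = 1 := by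
  have h1 : chainProp H x y 1 :=
    ⟨fun i => if i = 0 then x else y, rfl, rfl, fun i hi => by simpa [Nat.lt_one_iff.1 hi] using h⟩
  have hmem : chainProp H x y (hdistN H x y) := Nat.sInf_mem (s := {n | chainProp H x y n}) ⟨1, h1⟩
  have hne : hdistN H x y ≠ 0 := fun h0 => hxy (eq_of_chainProp_zero H (h0 ▸ hmem))
  have hle : hdistN H x y ≤ 1 := Nat.sInf_le h1
  simp [gdist, show hdistN H x y = 1 by omega]

end Distance

section Kantorovich

variable (H : Hypergraph V)

lemma zero_mem_Lip1 : (0 : V → ℝ) ∈ Lip1 H := fun x y => by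
  simpa [inn] using gdist_nonneg H x y

lemma inn_self_sub_smul_deg_le_of_mem_Lip1 (hdeg : ∀ x : V, 0 < deg H x) {f : V → ℝ}
    (hf : f ∈ Lip1 H) (x : V) :
    inn H (f - (f x / deg H x) • deg H) (f - (f x / deg H x) • deg H)
      ≤ ∑ t, (gdist H t x + gdist H x t) ^ 2 * deg H t := by
  refine Finset.sum_le_sum fun t _ => ?_
  have h1 := hf t x
  have h2 := hf x t
  rw [inn_delta_sub] at h1 h2
  have hsq : (f t / deg H t - f x / deg H x) ^ 2 ≤ (gdist H t x + gdist H x t) ^ 2 :=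
    sq_le_sq' (by linarith [gdist_nonneg H t x]) (by linarith [gdist_nonneg H x t])
  calc (f - (f x / deg H x) • deg H) t * (f - (f x / deg H x) • deg H) t / deg H t
      = (f t / deg H t - f x / deg H x) ^ 2 * deg H t := by
        simp only [Pi.sub_apply, Pi.smul_apply, smul_eq_mul]
        field_simp [(hdeg t).ne']
    _ ≤ (gdist H t x + gdist H x t) ^ 2 * deg H t := by gcongr; exact (hdeg t).le

/-- Subtracting `(f(x)/d_x) d` changes neither the pairing with `δ_x - δ_y` nor the resolvent
equation, and makes `f` vanish at `x`, so that `‖f‖` is bounded on `Lip_w^1`; conclude with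
`‖J_λ f‖ ≤ ‖f‖` and `2⟨g, u⟩ ≤ ‖g‖² + ‖u‖²`. -/
lemma bddAbove_KD_set (hdeg : ∀ x : V, 0 < deg H x) {l : ℝ} (hl : 0 < l) (x y : V) :
    BddAbove {r | ∃ f ∈ Lip1 H, r = inn H (Resolvent H l f) (delta x - delta y)} := by
  refine ⟨(∑ t, (gdist H t x + gdist H x t) ^ 2 * deg H t
    + inn H (delta x - delta y) (delta x - delta y)) / 2, ?_⟩
  rintro _ ⟨f, hf, rfl⟩
  obtain ⟨h, hh, hfJ⟩ := resolvent_spec H hdeg hl f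
  set c := f x / deg H x
  have hJ : inn H (Resolvent H l f - c • deg H) (Resolvent H l f - c • deg H)
      ≤ inn H (f - c • deg H) (f - c • deg H) :=
    inn_self_le_of_eq_add_smul H hdeg hl.le (mem_NL_sub_smul_deg H hdeg hh c)
      (by rw [sub_add_eq_add_sub, ← hfJ])
  have h2 := two_mul_inn_le H hdeg (Resolvent H l f - c • deg H) (delta x - delta y)
  rw [inn_sub_smul_deg_delta_sub H hdeg] at h2
  linarith [inn_self_sub_smul_deg_le_of_mem_Lip1 H hdeg hf x]

lemma KD_self (l : ℝ) (x : V) : KD H l x x = 0 := by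
  have hset : {r | ∃ f ∈ Lip1 H, r = inn H (Resolvent H l f) (delta x - delta x)} = {0} := by
    ext r
    simpa [inn] using fun _ => ⟨0, zero_mem_Lip1 H⟩
  rw [KD, hset, csSup_singleton]

lemma KD_le_add (hdeg : ∀ x : V, 0 < deg H x) {l : ℝ} (hl : 0 < l) (x y z : V) :
    KD H l x y ≤ KD H l x z + KD H l z y := by
  refine csSup_le ⟨_, 0, zero_mem_Lip1 H, rfl⟩ ?_
  rintro _ ⟨f, hf, rfl⟩
  have hsplit : inn H (Resolvent H l f) (delta x - delta y)
      = inn H (Resolvent H l f) (delta x - delta z)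
        + inn H (Resolvent H l f) (delta z - delta y) := by
    simp only [inn_delta_sub]
    ring
  rw [hsplit]
  exact add_le_add (le_csSup (bddAbove_KD_set H hdeg hl x z) ⟨f, hf, rfl⟩)
    (le_csSup (bddAbove_KD_set H hdeg hl z y) ⟨f, hf, rfl⟩)

lemma KD_le_sum_of_chain (hdeg : ∀ x : V, 0 < deg H x) {l : ℝ} (hl : 0 < l) (z : ℕ → V)
    (n : ℕ) : KD H l (z 0) (z n) ≤ ∑ i ∈ Finset.range n, KD H l (z i) (z (i + 1)) := by
  induction n with
  | zero => simp [KD_self]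
  | succ n ih =>
    rw [Finset.sum_range_succ]
    linarith [KD_le_add H hdeg hl (z 0) (z (n + 1)) (z n)]

lemma kappa_eq_of_adj {x y : V} (h : Adj H x y) (l : ℝ) : kappa H l x y = 1 - KD H l x y := by
  by_cases hxy : x = y
  · subst hxy
    simp [kappa, KD_self, gdist_self]
  · rw [kappa, gdist_eq_one_of_adj H hxy h, div_one]

lemma sum_kappa_div_le_of_chain (hdeg : ∀ x : V, 0 < deg H x) {l : ℝ} (hl : 0 < l) {n : ℕ}
    (hn : 0 < n) {z : ℕ → V} (hz : ∀ i < n, Adj H (z i) (z (i + 1)))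
    (hd : gdist H (z 0) (z n) = n) :
    (∑ i ∈ Finset.range n, kappa H l (z i) (z (i + 1))) / n ≤ kappa H l (z 0) (z n) := by
  have hn' : (0 : ℝ) < n := Nat.cast_pos.2 hn
  calc (∑ i ∈ Finset.range n, kappa H l (z i) (z (i + 1))) / n
      = 1 - (∑ i ∈ Finset.range n, KD H l (z i) (z (i + 1))) / n := by
        rw [Finset.sum_congr rfl fun i hi => kappa_eq_of_adj H (hz i (Finset.mem_range.1 hi)) l,
          Finset.sum_sub_distrib, Finset.sum_const, Finset.card_range, nsmul_eq_mul, mul_one,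
          sub_div, div_self hn'.ne']
    _ ≤ 1 - KD H l (z 0) (z n) / n := by
        gcongr
        exact KD_le_sum_of_chain H hdeg hl z n
    _ = kappa H l (z 0) (z n) := by rw [kappa, hd]

lemma le_kappaLower_self (a : ℝ) (x : V) : (a : EReal) ≤ kappaLower H x x := by
  simp only [kappaLower, kappa, KD_self, gdist_self, div_zero, sub_zero, one_div]
  rw [le_liminf_iff]
  intro c hc
  filter_upwards [tendsto_inv_nhdsGT_zero.eventually_gt_atTop a] with l hl
  exact hc.trans (EReal.coe_lt_coe_iff.2 hl)

end Kantorovich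

theorem stmt14_general (H : Hypergraph V) (hconn : Connected H)
    (hdeg : ∀ x : V, 0 < deg H x) (a : ℝ)
    (hadj : ∀ x y : V, x ≠ y → Adj H x y → (a : EReal) ≤ kappaLower H x y) :
    ∀ x y : V, x ≠ y → (a : EReal) ≤ kappaLower H x y := by
  intro x y hxy
  obtain ⟨z, hz0, hzn, hz⟩ := chainProp_hdistN H hconn x y
  set n := hdistN H x y
  have hpos : 0 < n := Nat.pos_of_ne_zero fun h0 => hxy (by rw [← hz0, ← hzn, h0])
  have hstep : ∀ i ∈ Finset.range n, (a : EReal) ≤ kappaLower H (z i) (z (i + 1)) := by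
    intro i hi
    by_cases heq : z i = z (i + 1)
    · rw [← heq]
      exact le_kappaLower_self H a _
    · exact hadj _ _ heq (hz i (Finset.mem_range.1 hi))
  refine (le_liminf_sum_div_card (f := fun i l => kappa H l (z i) (z (i + 1)) / l)
    (Finset.nonempty_range_iff.2 hpos.ne') hstep).trans (liminf_le_liminf ?_)
  filter_upwards [self_mem_nhdsWithin] with l (hl : 0 < l)
  have hchain := sum_kappa_div_le_of_chain H hdeg hl hpos hz (by rw [hz0, hzn]; rfl)
  rw [← hz0, ← hzn, Finset.card_range, ← Finset.sum_div, div_right_comm]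
  exact_mod_cast div_le_div_of_nonneg_right hchain hl.le

/-- a lower bound on `κ̲` over adjacent pairs implies the same
lower bound over all pairs. -/
theorem stmt14 [Nonempty V] (H : Hypergraph V) (hconn : Connected H)
    (hdeg : ∀ x : V, 0 < deg H x) (hV : 2 ≤ Fintype.card V) (a : ℝ)
    (hadj : ∀ x y : V, x ≠ y → Adj H x y → (a : EReal) ≤ kappaLower H x y) :
    ∀ x y : V, x ≠ y → (a : EReal) ≤ kappaLower H x y :=
  stmt14_general H hconn hdeg a hadj

end HypRicci
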